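/- arXiv:1506.03717 — 4 statements merged into one kernel-verified Lean document; each statement's English description precedes it below -/
import Mathlib

section
/- For every real x > 0 and every integer j ≥ -1, the modified Bessel functions of the first kind satisfy the Turán-type inequality I_j(x)^2 - I_{j+1}(x) · I_{j-1}(x) > 0. -/
/-!
Expanding `exp (x * cos θ)` in powers of `x` and integrating term by term against `cos (m * θ)`
gives `I_m(x) = ∑ₖ (x/2)^(m+2k) / (k! (k+m)!)` for `m : ℕ`. A Cauchy product and Vandermonde's
identity turn this into `I_μ(x) I_ν(x) = ∑ₙ (x/2)^(2n+μ+ν) / (n! (n+μ+ν)!) · C(2n+μ+ν, n+ν)`, so for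
`j ≥ 1` the series of `I_j²` and of `I_{j+1} I_{j-1}` differ only in the binomials `C(2N, N)` and
`C(2N, N-1)` with `N = n + j`, and the former is strictly larger. The Turán expression is even in
`j` because `I_{-m} = I_m`, and at `j = 0` it is `I_0² - I_1²`, which is positive since
`I_0 ± I_1 = π⁻¹ ∫₀^π e^{x cos θ} (1 ± cos θ) dθ > 0`.
-/

open Real

/-- Modified Bessel function of the first kind of integer order. -/
noncomputable def besselI (m : ℤ) (x : ℝ) : ℝ :=
  (1 / Real.pi) * ∫ θ in (0:ℝ)..Real.pi, Real.exp (x * Real.cos θ) * Real.cos (m * θ)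

open Finset intervalIntegral
open scoped Nat

theorem besselI_neg (m : ℤ) (x : ℝ) : besselI (-m) x = besselI m x := by
  simp only [besselI, Int.cast_neg, neg_mul, cos_neg]

-- `∫₀^π cosⁿθ cos mθ dθ`, read off from `cosⁿθ = 2⁻ⁿ ∑ₖ C(n, k) cos ((n - 2k) θ)`.
noncomputable def cosMoment (n m : ℕ) : ℝ :=
  if 2 ∣ n + m then π * n.choose ((n + m) / 2) / 2 ^ n else 0

theorem cosMoment_zero_left (m : ℕ) : cosMoment 0 m = if m = 0 then π else 0 := by
  unfold cosMoment
  split_ifs with hdvd hm hm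
  · simp [hm]
  · rw [Nat.choose_eq_zero_of_lt (by omega)]
    simp
  · omega
  · rfl

theorem cosMoment_succ_zero (n : ℕ) : cosMoment (n + 1) 0 = cosMoment n 1 := by
  unfold cosMoment
  split_ifs with hdvd
  · obtain ⟨t, rfl⟩ : ∃ t, n = 2 * t + 1 := ⟨n / 2, by omega⟩
    simp only [show (2 * t + 1 + 1 + 0) / 2 = t + 1 by omega]
    rw [Nat.choose_succ_succ, ← Nat.choose_symm_half, pow_succ]
    push_cast
    ring
  · rfl

theorem cosMoment_succ_succ (n m : ℕ) :
    cosMoment (n + 1) (m + 1) = (cosMoment n (m + 2) + cosMoment n m) / 2 := by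
  unfold cosMoment
  split_ifs <;> try omega
  · rw [show (n + 1 + (m + 1)) / 2 = (n + m) / 2 + 1 by omega,
      show (n + (m + 2)) / 2 = (n + m) / 2 + 1 by omega, Nat.choose_succ_succ, pow_succ]
    push_cast
    ring
  · simp

theorem cosMoment_eq_zero {n m : ℕ} (h : n ∉ Set.range (m + 2 * ·)) : cosMoment n m = 0 := by
  have : ¬ 2 ∣ n + m ∨ n < (n + m) / 2 := by
    by_contra! hcon
    exact h ⟨(n - m) / 2, by dsimp only; omega⟩
  unfold cosMoment
  rcases this with hodd | hlt
  · rw [if_neg hodd]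
  · simp [Nat.choose_eq_zero_of_lt hlt]

theorem cosMoment_add_two_mul (m k : ℕ) :
    cosMoment (m + 2 * k) m = π * (m + 2 * k)! / ((k ! * (k + m)!) * 2 ^ (m + 2 * k)) := by
  have hchoose :
      ((m + 2 * k).choose ((m + 2 * k + m) / 2) : ℝ) = (m + 2 * k)! / ((k + m)! * k !) := by
    rw [show (m + 2 * k + m) / 2 = k + m by omega, show m + 2 * k = k + m + k by ring,
      Nat.cast_add_choose]
  rw [cosMoment, if_pos ⟨m + k, by ring⟩, hchoose]
  ring

theorem integral_cos_nat_mul (m : ℕ) :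
    ∫ θ in (0)..π, cos (m * θ) = cosMoment 0 m := by
  rw [cosMoment_zero_left]
  split_ifs with hm
  · simp [hm]
  · rw [integral_comp_mul_left (fun θ => cos θ) (Nat.cast_ne_zero.mpr hm), integral_cos]
    simp

theorem integral_cos_pow_mul_cos_nat_mul (n m : ℕ) :
    ∫ θ in (0)..π, cos θ ^ n * cos (m * θ) = cosMoment n m := by
  induction n generalizing m with
  | zero => simp [integral_cos_nat_mul m]
  | succ n ih =>
    cases m with
    | zero => simpa [pow_succ, mul_comm, cosMoment_succ_zero] using ih 1
    | succ m =>
      have product_to_sum : ∀ θ : ℝ, cos θ ^ (n + 1) * cos ((m + 1 : ℕ) * θ) =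
          (cos θ ^ n * cos ((m + 2 : ℕ) * θ) + cos θ ^ n * cos (m * θ)) / 2 := by
        intro θ
        have h₁ : ((m + 2 : ℕ) : ℝ) * θ = (m + 1 : ℕ) * θ + θ := by push_cast; ring
        have h₂ : (m : ℝ) * θ = (m + 1 : ℕ) * θ - θ := by push_cast; ring
        rw [h₁, h₂, cos_add, cos_sub]
        ring
      have hcont : ∀ k : ℕ,
          IntervalIntegrable (fun θ => cos θ ^ n * cos (k * θ)) MeasureTheory.volume 0 π :=
        fun k => by apply Continuous.intervalIntegrable; fun_prop
      simp_rw [product_to_sum]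
      rw [integral_div, integral_add (hcont _) (hcont _), ih, ih, cosMoment_succ_succ]

theorem hasSum_pow_div_factorial_mul_cosMoment (m : ℕ) (x : ℝ) :
    HasSum (fun n => x ^ n / n ! * cosMoment n m) (π * besselI m x) := by
  have hexp : ∀ θ : ℝ, HasSum (fun n => x ^ n / n ! * (cos θ ^ n * cos (m * θ)))
      (exp (x * cos θ) * cos (m * θ)) := by
    intro θ
    simpa [Real.exp_eq_exp_ℝ, mul_pow, div_mul_eq_mul_div, mul_assoc]
      using (NormedSpace.expSeries_div_hasSum_exp (x * cos θ)).mul_right (cos (m * θ))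
  have hterm := hasSum_integral_of_dominated_convergence (μ := MeasureTheory.volume)
    (a := 0) (b := π) (fun n _ => |x| ^ n / n !) (fun n => by fun_prop)
    (fun n => Filter.Eventually.of_forall fun θ _ => ?_)
    (Filter.Eventually.of_forall fun θ _ => summable_pow_div_factorial |x|)
    intervalIntegrable_const (Filter.Eventually.of_forall fun θ _ => hexp θ)
  · simpa [integral_const_mul, integral_cos_pow_mul_cos_nat_mul, besselI, pi_ne_zero] using hterm
  · have hcos : |cos θ ^ n * cos (m * θ)| ≤ 1 := by
      rw [abs_mul, abs_pow]
      exact mul_le_one₀ (pow_le_one₀ (abs_nonneg _) (abs_cos_le_one θ)) (abs_nonneg _)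
        (abs_cos_le_one _)
    rw [norm_mul, norm_div, norm_pow, Real.norm_eq_abs, RCLike.norm_natCast]
    exact mul_le_of_le_one_right (by positivity) hcos

theorem hasSum_besselI (m : ℕ) (x : ℝ) :
    HasSum (fun k => (x / 2) ^ (m + 2 * k) / (k ! * (k + m)!)) (besselI m x) := by
  have hinj : Function.Injective (m + 2 * · : ℕ → ℕ) := fun a b h => by simp at h; omega
  have hsum := (hinj.hasSum_iff fun n hn => by simp [cosMoment_eq_zero hn]).2
    (hasSum_pow_div_factorial_mul_cosMoment m x)
  rw [← mul_div_cancel_left₀ (besselI m x) pi_ne_zero]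
  refine (hsum.div_const π).congr_fun fun k => ?_
  simp only [Function.comp_apply, cosMoment_add_two_mul, div_pow]
  field_simp

theorem Nat.sum_antidiagonal_choose_mul_choose_add (n N ν : ℕ) :
    ∑ kl ∈ antidiagonal n, n.choose kl.1 * N.choose (kl.2 + ν) = (n + N).choose (n + ν) := by
  rw [Nat.add_choose_eq,
    Nat.sum_antidiagonal_eq_sum_range_succ (fun a b => n.choose a * N.choose b),
    Nat.sum_antidiagonal_eq_sum_range_succ (fun k l => n.choose k * N.choose (l + ν)),
    show (n + ν).succ = n.succ + ν by omega, sum_range_add]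
  have hvanish : ∀ i ∈ range ν, n.choose (n.succ + i) * N.choose (n + ν - (n.succ + i)) = 0 :=
    fun i _ => by rw [Nat.choose_eq_zero_of_lt (by omega), zero_mul]
  rw [sum_eq_zero hvanish, add_zero]
  refine sum_congr rfl fun k hk => ?_
  rw [show n + ν - k = n - k + ν by simp at hk; omega]

theorem sum_antidiagonal_inv_factorial_mul (μ ν n : ℕ) :
    ∑ kl ∈ antidiagonal n, ((kl.1 ! * (kl.1 + μ)! * kl.2 ! * (kl.2 + ν)! : ℕ) : ℝ)⁻¹ =
      (2 * n + μ + ν).choose (n + ν) / (n ! * (n + μ + ν)!) := by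
  have hterm : ∀ kl ∈ antidiagonal n, ((kl.1 ! * (kl.1 + μ)! * kl.2 ! * (kl.2 + ν)! : ℕ) : ℝ)⁻¹ =
      (n.choose kl.1 * (n + μ + ν).choose (kl.2 + ν) : ℕ) / (n ! * (n + μ + ν)!) := by
    rintro ⟨k, l⟩ hkl
    obtain rfl : k + l = n := mem_antidiagonal.mp hkl
    rw [show k + l + μ + ν = (l + ν) + (k + μ) by ring]
    push_cast
    rw [Nat.cast_add_choose, Nat.cast_add_choose]
    field_simp
  rw [sum_congr rfl hterm, ← sum_div, ← Nat.cast_sum, Nat.sum_antidiagonal_choose_mul_choose_add,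
    show n + (n + μ + ν) = 2 * n + μ + ν by ring]

theorem hasSum_besselI_mul_besselI (μ ν : ℕ) (x : ℝ) :
    HasSum (fun n => (x / 2) ^ (2 * n + μ + ν) / (n ! * (n + μ + ν)!) *
      (2 * n + μ + ν).choose (n + ν)) (besselI μ x * besselI ν x) := by
  have habs : ∀ m : ℕ, Summable fun k => ‖(x / 2) ^ (m + 2 * k) / (k ! * (k + m)!)‖ := fun m => by
    simpa [abs_div, abs_mul] using (hasSum_besselI m |x|).summable
  have hprod := (summable_norm_sum_mul_antidiagonal_of_summable_norm (habs μ) (habs ν)).of_norm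
  rw [← (hasSum_besselI μ x).tsum_eq, ← (hasSum_besselI ν x).tsum_eq,
    tsum_mul_tsum_eq_tsum_sum_antidiagonal_of_summable_norm (habs μ) (habs ν)]
  refine hprod.hasSum.congr_fun fun n => ?_
  rw [mul_comm_div, ← sum_antidiagonal_inv_factorial_mul, mul_sum]
  refine sum_congr rfl fun ⟨k, l⟩ hkl => ?_
  obtain rfl : k + l = n := mem_antidiagonal.mp hkl
  rw [show 2 * (k + l) + μ + ν = (μ + 2 * k) + (ν + 2 * l) by ring, pow_add]
  push_cast
  field_simp

theorem Nat.choose_lt_choose_succ {n k : ℕ} (h : 2 * k + 1 < n) :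
    n.choose k < n.choose (k + 1) := by
  have hrec := Nat.choose_succ_right_eq n k
  have hpos := Nat.choose_pos (show k ≤ n by omega)
  have hgap : k + 1 < n - k := by omega
  by_contra! hle
  nlinarith [Nat.mul_le_mul hle hgap.le]

theorem besselI_succ_sq_sub_mul_pos (p : ℕ) {x : ℝ} (hx : x ≠ 0) :
    0 < besselI (p + 1 : ℕ) x ^ 2 - besselI (p + 2 : ℕ) x * besselI p x := by
  have hsq := hasSum_besselI_mul_besselI (p + 1) (p + 1) x
  have hprod := hasSum_besselI_mul_besselI (p + 2) p x
  simp only [show ∀ n, 2 * n + (p + 2) + p = 2 * n + (p + 1) + (p + 1) by intro n; ring,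
    show ∀ n, n + (p + 2) + p = n + (p + 1) + (p + 1) by intro n; ring] at hprod
  have hlt : ∀ n : ℕ, (2 * n + (p + 1) + (p + 1)).choose (n + p) <
      (2 * n + (p + 1) + (p + 1)).choose (n + (p + 1)) :=
    fun n => Nat.choose_lt_choose_succ (by omega)
  have hcoeff : ∀ n : ℕ,
      0 < (x / 2) ^ (2 * n + (p + 1) + (p + 1)) / (n ! * (n + (p + 1) + (p + 1))!) := fun n =>
    div_pos (Even.pow_pos ⟨n + p + 1, by ring⟩ (div_ne_zero hx two_ne_zero)) (by positivity)
  have hstrict : ∀ n, _ < _ := fun n => mul_lt_mul_of_pos_left (Nat.cast_lt.mpr (hlt n)) (hcoeff n)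
  rw [sq, sub_pos]
  exact hasSum_lt (fun n => (hstrict n).le) (hstrict 0) hprod hsq

theorem besselI_zero_add_mul_besselI_one_pos (x : ℝ) {ε : ℝ} (hε : |ε| ≤ 1) :
    0 < besselI 0 x + ε * besselI 1 x := by
  have hcont : ∀ c : ℝ, IntervalIntegrable (fun θ => exp (x * cos θ) * cos (c * θ))
      MeasureTheory.volume 0 π := fun c => by apply Continuous.intervalIntegrable; fun_prop
  have hsplit : ∫ θ in (0)..π, exp (x * cos θ) * (1 + ε * cos θ) =
      (∫ θ in (0)..π, exp (x * cos θ) * cos (0 * θ)) +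
        ε * ∫ θ in (0)..π, exp (x * cos θ) * cos (1 * θ) := by
    rw [← integral_const_mul, ← integral_add (hcont _) ((hcont _).const_mul ε)]
    simp only [zero_mul, cos_zero, one_mul, mul_add, mul_one, mul_left_comm ε]
  have hcomb : besselI 0 x + ε * besselI 1 x =
      π⁻¹ * ∫ θ in (0)..π, exp (x * cos θ) * (1 + ε * cos θ) := by
    rw [hsplit, besselI, besselI]
    push_cast
    ring
  rw [hcomb]
  refine mul_pos (inv_pos.mpr pi_pos) (intervalIntegral_pos_of_pos_on ?_ (fun θ hθ => ?_) pi_pos)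
  · apply Continuous.intervalIntegrable; fun_prop
  · have hcos : |cos θ| < 1 := by
      rw [← sq_lt_one_iff_abs_lt_one]
      nlinarith [sin_sq_add_cos_sq θ, sin_pos_of_pos_of_lt_pi hθ.1 hθ.2]
    have : |ε * cos θ| < 1 := by
      rw [abs_mul]; exact mul_lt_one_of_nonneg_of_lt_one_right hε (abs_nonneg _) hcos
    exact mul_pos (exp_pos _) (by linarith [neg_abs_le (ε * cos θ)])

theorem abs_besselI_one_lt_besselI_zero (x : ℝ) : |besselI 1 x| < besselI 0 x := by
  have hplus := besselI_zero_add_mul_besselI_one_pos x (ε := 1) (by simp)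
  have hminus := besselI_zero_add_mul_besselI_one_pos x (ε := -1) (by simp)
  rw [abs_lt]
  constructor <;> linarith

theorem turan_besselI_general (x : ℝ) (hx : 0 < x) (j : ℤ) :
    0 < besselI j x ^ 2 - besselI (j + 1) x * besselI (j - 1) x := by
  wlog hj : 0 ≤ j generalizing j
  · have := this (-j) (by omega)
    rwa [show -j + 1 = -(j - 1) by ring, show -j - 1 = -(j + 1) by ring, besselI_neg, besselI_neg,
      besselI_neg, mul_comm] at this
  obtain ⟨_ | p, rfl⟩ := Int.eq_ofNat_of_zero_le hj
  · rw [Nat.cast_zero, zero_add, zero_sub, besselI_neg, ← sq, sub_pos, sq_lt_sq]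
    exact (abs_besselI_one_lt_besselI_zero x).trans_le (le_abs_self _)
  · rw [show ((p + 1 : ℕ) : ℤ) + 1 = (p + 2 : ℕ) by push_cast; ring, Nat.cast_add_one,
      add_sub_cancel_right]
    exact besselI_succ_sq_sub_mul_pos p hx.ne'

theorem turan_besselI (x : ℝ) (hx : 0 < x) (j : ℤ) (hj : -1 ≤ j) :
    0 < besselI j x ^ 2 - besselI (j + 1) x * besselI (j - 1) x :=
  turan_besselI_general x hx j
end

section
/- For every real x > 0 and every integer j ≥ 0, the modified Bessel functions of the second kind satisfy K_j(x)^2 < K_{j-1}(x) · K_{j+1}(x). -/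
/-!
Since `cosh ((ν - 1) t) * cosh ((ν + 1) t) = cosh (ν t) ^ 2 + sinh t ^ 2`, the quadratic form
`a ↦ a² cosh ((ν - 1) t) - 2 a cosh (ν t) + cosh ((ν + 1) t)` is positive definite for every
`t ≠ 0`. Integrating against `exp (-x cosh t)` over `t > 0` shows that
`a ↦ a² K_{ν-1}(x) - 2 a K_ν(x) + K_{ν+1}(x)` is positive definite too, so its discriminant
`K_ν(x)² - K_{ν-1}(x) K_{ν+1}(x)` is negative.
-/

open Real MeasureTheory

/-- Modified Bessel function of the second kind of integer order. -/
noncomputable def besselK (m : ℤ) (x : ℝ) : ℝ :=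
  ∫ t in Set.Ioi (0:ℝ), Real.exp (-x * Real.cosh t) * Real.cosh (m * t)

open Filter Set

theorem Real.cosh_le_exp_abs (y : ℝ) : cosh y ≤ exp |y| := by
  rw [cosh_eq]
  linarith [exp_le_exp.2 (le_abs_self y), exp_le_exp.2 (neg_le_abs y)]

theorem Real.sq_div_four_le_cosh {t : ℝ} (ht : 0 ≤ t) : t ^ 2 / 4 ≤ cosh t := by
  rw [cosh_eq]
  linarith [quadratic_le_exp_of_nonneg ht, exp_pos (-t)]

theorem Real.cosh_sub_mul_cosh_add (u t : ℝ) :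
    cosh (u - t) * cosh (u + t) = cosh u ^ 2 + sinh t ^ 2 := by
  rw [cosh_sub, cosh_add]
  linear_combination cosh u ^ 2 * cosh_sq t + sinh t ^ 2 * cosh_sq u

theorem Real.two_mul_mul_cosh_lt (a u : ℝ) {t : ℝ} (ht : t ≠ 0) :
    2 * a * cosh u < a ^ 2 * cosh (u - t) + cosh (u + t) := by
  have hsinh : 0 < sinh t ^ 2 := by have := sinh_ne_zero.2 ht; positivity
  have hcosh : 0 < cosh (u - t) := cosh_pos _
  nlinarith [cosh_sub_mul_cosh_add u t, sq_nonneg (a * cosh (u - t) - cosh u)]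

theorem sq_lt_mul_of_forall_two_mul_lt {A B C : ℝ} (hA : 0 < A)
    (h : ∀ a : ℝ, 2 * a * B < a ^ 2 * A + C) : B ^ 2 < A * C := by
  have := h (B / A)
  field_simp at this
  nlinarith

theorem MeasureTheory.setIntegral_pos_of_pos {α : Type*} [MeasurableSpace α] {μ : Measure α}
    {s : Set α} {f : α → ℝ} (hs : MeasurableSet s) (hμs : μ s ≠ 0) (hfi : IntegrableOn f s μ)
    (hf : ∀ x ∈ s, 0 < f x) : 0 < ∫ x in s, f x ∂μ := by
  rw [setIntegral_pos_iff_support_of_nonneg_ae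
      (ae_restrict_of_forall_mem hs fun x hx => (hf x hx).le) hfi,
    inter_eq_right.2 fun x hx => Function.mem_support.2 (hf x hx).ne']
  exact pos_iff_ne_zero.2 hμs

theorem integrableOn_exp_neg_mul_cosh_mul_cosh {x : ℝ} (hx : 0 < x) (ν : ℝ) :
    IntegrableOn (fun t => exp (-x * cosh t) * cosh (ν * t)) (Ioi 0) := by
  refine integrable_of_isBigO_exp_neg one_pos (by fun_prop) (.of_bound 1 ?_)
  filter_upwards [eventually_ge_atTop 0, eventually_ge_atTop (4 * (|ν| + 1) / x)] with t ht hT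
  have hdecay : |ν| * t - x * cosh t ≤ -1 * t := by
    rw [div_le_iff₀ hx] at hT
    nlinarith [sq_div_four_le_cosh ht]
  rw [norm_of_nonneg (by positivity), norm_of_nonneg (by positivity), one_mul]
  calc exp (-x * cosh t) * cosh (ν * t) ≤ exp (-x * cosh t) * exp (|ν| * t) := by
        gcongr
        simpa [abs_mul, abs_of_nonneg ht] using cosh_le_exp_abs (ν * t)
    _ = exp (|ν| * t - x * cosh t) := by rw [← exp_add]; ring_nf
    _ ≤ exp (-1 * t) := exp_le_exp.2 hdecay

theorem besselK_pos (m : ℤ) {x : ℝ} (hx : 0 < x) : 0 < besselK m x :=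
  setIntegral_pos_of_pos measurableSet_Ioi (by simp) (integrableOn_exp_neg_mul_cosh_mul_cosh hx m)
    fun _ _ => by positivity

theorem two_mul_mul_besselK_lt (a : ℝ) (m : ℤ) {x : ℝ} (hx : 0 < x) :
    2 * a * besselK m x < a ^ 2 * besselK (m - 1) x + besselK (m + 1) x := by
  set F : ℝ → ℝ → ℝ := fun ν t => exp (-x * cosh t) * cosh (ν * t)
  have hint : ∀ ν, IntegrableOn (F ν) (Ioi 0) := integrableOn_exp_neg_mul_cosh_mul_cosh hx
  have hK : ∀ n : ℤ, besselK n x = ∫ t in Ioi 0, F n t := fun _ => rfl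
  have hint₁ : IntegrableOn (fun t => a ^ 2 * F (m - 1) t) (Ioi 0) := (hint _).const_mul _
  have hint₂ : IntegrableOn (fun t => a ^ 2 * F (m - 1) t + F (m + 1) t) (Ioi 0) :=
    hint₁.add (hint _)
  have hint₃ : IntegrableOn (fun t => 2 * a * F m t) (Ioi 0) := (hint _).const_mul _
  have hpos : 0 < ∫ t in Ioi 0, (a ^ 2 * F (m - 1) t + F (m + 1) t - 2 * a * F m t) := by
    refine setIntegral_pos_of_pos measurableSet_Ioi (by simp) (hint₂.sub hint₃) fun t ht => ?_
    have hcosh := two_mul_mul_cosh_lt a (m * t) ht.ne'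
    have hexp := exp_pos (-x * cosh t)
    simp only [F, sub_mul, add_mul, one_mul]
    nlinarith
  rw [integral_sub hint₂ hint₃, integral_add hint₁ (hint _), integral_const_mul,
    integral_const_mul] at hpos
  rw [hK, hK, hK]
  push_cast
  linarith

theorem turan_besselK_general (x : ℝ) (hx : 0 < x) (j : ℤ) :
    besselK j x ^ 2 < besselK (j - 1) x * besselK (j + 1) x :=
  sq_lt_mul_of_forall_two_mul_lt (besselK_pos (j - 1) hx) fun a => two_mul_mul_besselK_lt a j hx

theorem turan_besselK (x : ℝ) (hx : 0 < x) (j : ℤ) (hj : 0 ≤ j) :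
    besselK j x ^ 2 < besselK (j - 1) x * besselK (j + 1) x :=
  turan_besselK_general x hx j
end

section
/- Let H be a complex Hilbert space and let f : [0,1] → H be a differentiable curve satisfying f'(t) = S f(t) + A f(t), where S is a bounded symmetric operator and A is a bounded skew-symmetric operator on H, both independent of t. If the commutator [S,A] = SA − AS is a positive operator, then the function H(t) = ⟨f(t), f(t)⟩ is logarithmically convex on [0,1], i.e., H(t) ≤ H(0)^{1−t} H(1)^t for all t ∈ [0,1]. -/
/-!
Write `p = ‖f‖²`. The skew part drops out of `p' = 2 re ⟪S f, f⟫`, and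
`p'' = 4 ‖S f‖² + 2 re ⟪[S, A] f, f⟫ ≥ 4 ‖S f‖²`, so Cauchy–Schwarz gives `p'² ≤ p p''`,
i.e. `(log p)'' ≥ 0`. To avoid the zeros of `p`, this is applied to `p + ε`, for which
`p'² ≤ (p + ε) p''` still holds as `p'' ≥ 0`, and then `ε → 0`. The complex case is reduced to the real one by taking real parts.
-/

open Real
open scoped RealInnerProductSpace

section LogConvexity

variable {p q r : ℝ → ℝ}

theorem convexOn_log_add_of_sq_le_mul_deriv {D : Set ℝ} (hD : Convex ℝ D)
    (hp : ∀ s ∈ D, HasDerivAt p (q s) s) (hq : ∀ s ∈ D, HasDerivAt q (r s) s)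
    (hp₀ : ∀ s ∈ D, 0 ≤ p s) (hr₀ : ∀ s ∈ D, 0 ≤ r s) (hqpr : ∀ s ∈ D, q s ^ 2 ≤ p s * r s)
    {ε : ℝ} (hε : 0 < ε) :
    ConvexOn ℝ D fun s => log (p s + ε) := by
  have hpos : ∀ s ∈ D, p s + ε ≠ 0 := fun s hs => by linarith [hp₀ s hs]
  have hlog : ∀ s ∈ D, HasDerivAt (fun u => log (p u + ε)) (q s / (p s + ε)) s :=
    fun s hs => ((hp s hs).add_const ε).log (hpos s hs)
  refine convexOn_of_hasDerivWithinAt2_nonneg hD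
    (fun s hs => (hlog s hs).continuousAt.continuousWithinAt)
    (fun s hs => (hlog s (interior_subset hs)).hasDerivWithinAt)
    (fun s hs => ((hq s (interior_subset hs)).div ((hp s (interior_subset hs)).add_const ε)
      (hpos s (interior_subset hs))).hasDerivWithinAt) fun s hs => ?_
  have hs := interior_subset hs
  have := mul_nonneg hε.le (hr₀ s hs)
  exact div_nonneg (by nlinarith [hqpr s hs]) (sq_nonneg _)

theorem ConvexOn.le_rpow_mul_rpow_of_log {g : ℝ → ℝ} (hg : ∀ s ∈ Set.Icc (0 : ℝ) 1, 0 < g s)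
    (hconv : ConvexOn ℝ (Set.Icc 0 1) fun s => log (g s)) {t : ℝ} (ht : t ∈ Set.Icc (0 : ℝ) 1) :
    g t ≤ g 0 ^ (1 - t) * g 1 ^ t := by
  have h := hconv.2 (Set.left_mem_Icc.2 zero_le_one) (Set.right_mem_Icc.2 zero_le_one)
    (sub_nonneg.2 ht.2) ht.1 (sub_add_cancel 1 t)
  simp only [smul_eq_mul, mul_zero, mul_one, zero_add] at h
  rwa [← exp_le_exp, exp_log (hg t ht), exp_add, mul_comm (1 - t), mul_comm t,
    ← rpow_def_of_pos (hg 0 (Set.left_mem_Icc.2 zero_le_one)),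
    ← rpow_def_of_pos (hg 1 (Set.right_mem_Icc.2 zero_le_one))] at h

theorem le_rpow_mul_rpow_of_sq_le_mul_deriv
    (hp : ∀ s ∈ Set.Icc (0 : ℝ) 1, HasDerivAt p (q s) s)
    (hq : ∀ s ∈ Set.Icc (0 : ℝ) 1, HasDerivAt q (r s) s)
    (hp₀ : ∀ s ∈ Set.Icc (0 : ℝ) 1, 0 ≤ p s) (hr₀ : ∀ s ∈ Set.Icc (0 : ℝ) 1, 0 ≤ r s)
    (hqpr : ∀ s ∈ Set.Icc (0 : ℝ) 1, q s ^ 2 ≤ p s * r s) {t : ℝ} (ht : t ∈ Set.Icc (0 : ℝ) 1) :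
    p t ≤ p 0 ^ (1 - t) * p 1 ^ t := by
  have hshift : ∀ ε > 0, p t ≤ (p 0 + ε) ^ (1 - t) * (p 1 + ε) ^ t - ε := fun ε hε =>
    le_sub_iff_add_le.2 <|
      (convexOn_log_add_of_sq_le_mul_deriv (convex_Icc 0 1) hp hq hp₀ hr₀ hqpr hε
        ).le_rpow_mul_rpow_of_log (fun s hs => by linarith [hp₀ s hs]) ht
  have hcont : ContinuousAt (fun ε => (p 0 + ε) ^ (1 - t) * (p 1 + ε) ^ t - ε) 0 := by
    have h₁ : 0 ≤ 1 - t := sub_nonneg.2 ht.2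
    have h₂ : 0 ≤ t := ht.1
    fun_prop (disch := simp [*])
  simpa using ge_of_tendsto (hcont.tendsto.mono_left (nhdsWithin_le_nhds (s := Set.Ioi 0)))
    (eventually_nhdsWithin_of_forall hshift)

end LogConvexity

section Operators

variable {F : Type*} [NormedAddCommGroup F] [InnerProductSpace ℝ F] {S A : F →L[ℝ] F}

theorem real_inner_self_apply_eq_zero_of_skew (hA : ∀ x y, ⟪A x, y⟫ = -⟪x, A y⟫) (x : F) :
    ⟪x, A x⟫ = 0 := by
  linarith [hA x x, real_inner_comm x (A x)]

theorem real_inner_commutator_apply_self (hS : (S : F →ₗ[ℝ] F).IsSymmetric)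
    (hA : ∀ x y, ⟪A x, y⟫ = -⟪x, A y⟫) (x : F) :
    ⟪S (A x) - A (S x), x⟫ = 2 * ⟪S x, A x⟫ := by
  have hS' : ∀ x y, ⟪S x, y⟫ = ⟪x, S y⟫ := hS
  rw [inner_sub_left, hS' (A x) x, hA (S x) x, real_inner_comm (A x)]
  ring

theorem sq_two_inner_apply_self_le (x : F) {c : ℝ} (hc : 0 ≤ c) :
    (2 * ⟪S x, x⟫) ^ 2 ≤ ‖x‖ ^ 2 * (4 * ‖S x‖ ^ 2 + 4 * c) := by
  have h := abs_real_inner_le_norm (S x) x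
  have h2 : ⟪S x, x⟫ ^ 2 ≤ (‖S x‖ * ‖x‖) ^ 2 := sq_le_sq' (abs_le.1 h).1 (abs_le.1 h).2
  nlinarith [mul_nonneg (sq_nonneg ‖x‖) hc]

variable {f : ℝ → F}

theorem hasDerivAt_norm_sq_of_hasDerivAt_add (hA : ∀ x y, ⟪A x, y⟫ = -⟪x, A y⟫) {s : ℝ}
    (hf : HasDerivAt f (S (f s) + A (f s)) s) :
    HasDerivAt (fun u => ‖f u‖ ^ 2) (2 * ⟪S (f s), f s⟫) s := by
  convert hf.norm_sq using 1
  rw [inner_add_right, real_inner_self_apply_eq_zero_of_skew hA, real_inner_comm, add_zero]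

theorem hasDerivAt_inner_apply_self_of_hasDerivAt_add (hS : (S : F →ₗ[ℝ] F).IsSymmetric)
    {s : ℝ} (hf : HasDerivAt f (S (f s) + A (f s)) s) :
    HasDerivAt (fun u => 2 * ⟪S (f u), f u⟫)
      (4 * ‖S (f s)‖ ^ 2 + 4 * ⟪S (f s), A (f s)⟫) s := by
  have hS' : ∀ x y, ⟪S x, y⟫ = ⟪x, S y⟫ := hS
  refine (((S.hasFDerivAt.comp_hasDerivAt s hf).inner ℝ hf).const_mul 2).congr_deriv ?_
  rw [Function.comp_apply, map_add, inner_add_left, inner_add_right, hS' (S (f s)),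
    hS' (A (f s)), real_inner_self_eq_norm_sq, real_inner_comm (A (f s))]
  ring

theorem norm_sq_le_rpow_mul_rpow_of_commutator_nonneg (hS : (S : F →ₗ[ℝ] F).IsSymmetric)
    (hA : ∀ x y, ⟪A x, y⟫ = -⟪x, A y⟫) (hcomm : ∀ x, 0 ≤ ⟪S (A x) - A (S x), x⟫)
    (hf : ∀ t ∈ Set.Icc (0 : ℝ) 1, HasDerivAt f (S (f t) + A (f t)) t)
    {t : ℝ} (ht : t ∈ Set.Icc (0 : ℝ) 1) :
    ‖f t‖ ^ 2 ≤ (‖f 0‖ ^ 2) ^ (1 - t) * (‖f 1‖ ^ 2) ^ t := by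
  have hSA : ∀ x, 0 ≤ ⟪S x, A x⟫ := fun x => by
    linarith [hcomm x, real_inner_commutator_apply_self hS hA x]
  exact le_rpow_mul_rpow_of_sq_le_mul_deriv
    (fun s hs => hasDerivAt_norm_sq_of_hasDerivAt_add hA (hf s hs))
    (fun s hs => hasDerivAt_inner_apply_self_of_hasDerivAt_add hS (hf s hs))
    (fun _ _ => sq_nonneg _) (fun s _ => by have := hSA (f s); positivity)
    (fun s _ => sq_two_inner_apply_self_le (f s) (hSA (f s))) ht

end Operators

theorem logConvexity_abstract_general
    {H : Type*} [NormedAddCommGroup H] [InnerProductSpace ℂ H]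
    (S A : H →L[ℂ] H)
    (hS : ∀ x y : H, inner ℂ (S x) y = (inner ℂ x (S y) : ℂ))
    (hA : ∀ x y : H, inner ℂ (A x) y = (-(inner ℂ x (A y)) : ℂ))
    (hcomm : ∀ x : H, 0 ≤ (inner ℂ (S (A x) - A (S x)) x : ℂ).re)
    (f : ℝ → H)
    (hf : ∀ t ∈ Set.Icc (0:ℝ) 1, HasDerivAt f (S (f t) + A (f t)) t)
    (t : ℝ) (ht : t ∈ Set.Icc (0:ℝ) 1) :
    ‖f t‖ ^ 2 ≤ (‖f 0‖ ^ 2) ^ (1 - t) * (‖f 1‖ ^ 2) ^ t := by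
  let : InnerProductSpace ℝ H := .complexToReal
  refine norm_sq_le_rpow_mul_rpow_of_commutator_nonneg (S := S.restrictScalars ℝ)
    (A := A.restrictScalars ℝ) (fun x y => ?_) (fun x y => ?_) hcomm hf ht
  · simp [real_inner_eq_re_inner ℂ, hS]
  · simp [real_inner_eq_re_inner ℂ, hA]

theorem logConvexity_abstract
    {H : Type*} [NormedAddCommGroup H] [InnerProductSpace ℂ H] [CompleteSpace H]
    (S A : H →L[ℂ] H)
    (hS : ∀ x y : H, inner ℂ (S x) y = (inner ℂ x (S y) : ℂ))
    (hA : ∀ x y : H, inner ℂ (A x) y = (-(inner ℂ x (A y)) : ℂ))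
    (hcomm : ∀ x : H, 0 ≤ (inner ℂ (S (A x) - A (S x)) x : ℂ).re)
    (f : ℝ → H)
    (hf : ∀ t ∈ Set.Icc (0:ℝ) 1, HasDerivAt f (S (f t) + A (f t)) t)
    (t : ℝ) (ht : t ∈ Set.Icc (0:ℝ) 1) :
    ‖f t‖ ^ 2 ≤ (‖f 0‖ ^ 2) ^ (1 - t) * (‖f 1‖ ^ 2) ^ t :=
  logConvexity_abstract_general S A hS hA hcomm f hf t ht
end

section
/- For every s > 0, π(I₀(s) − L₀(s)) = 2/s + R(s) where |R(s)| ≤ 16/s³; in particular, for s large enough, π(I₀(s) − L₀(s)) ≤ 3/s. -/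
/-!
By the symmetry `x ↦ π - x` it suffices to integrate over `[0, π/2]`. There
`x - x³/6 ≤ sin x ≤ x` and, by Jordan's inequality, `sin x ≥ 2x/π`, so `e^{-s sin x}`
differs from `e^{-sx}` by at most `s (x³/6) e^{-2sx/π}`, whose integral is `O(s⁻³)`. The
integral of `e^{-sx}` over `[0, π/2]` is `1/s` up to the exponentially small `e^{-sπ/2}/s`.
-/

open Real intervalIntegral
open scoped Nat

theorem intervalIntegral.integral_zero_two_mul_eq_two_smul_of_symm {E : Type*}
    [NormedAddCommGroup E] [NormedSpace ℝ E] {f : ℝ → E} {a : ℝ} (ha : 0 ≤ a)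
    (hf : IntervalIntegrable f MeasureTheory.volume 0 (2 * a))
    (hsymm : ∀ x, f (2 * a - x) = f x) :
    ∫ x in 0..2 * a, f x = (2 : ℝ) • ∫ x in 0..a, f x := by
  have hreflect : ∫ x in 0..a, f x = ∫ x in a..2 * a, f x :=
    calc ∫ x in 0..a, f x = ∫ x in 0..a, f (2 * a - x) := by simp only [hsymm]
      _ = ∫ x in a..2 * a, f x := by rw [integral_comp_sub_left]; congr 1 <;> ring
  have hmid : a ∈ Set.uIcc 0 (2 * a) := Set.mem_uIcc_of_le ha (by linarith)
  rw [← integral_add_adjacent_intervals (b := a)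
    (hf.mono_set (Set.uIcc_subset_uIcc Set.left_mem_uIcc hmid))
    (hf.mono_set (Set.uIcc_subset_uIcc hmid Set.right_mem_uIcc)), ← hreflect, two_smul]

theorem Real.exp_neg_sub_exp_neg_le (a b : ℝ) : exp (-a) - exp (-b) ≤ exp (-a) * (b - a) := by
  have h := mul_le_mul_of_nonneg_left (add_one_le_exp (-(b - a))) (exp_pos (-a)).le
  rw [← exp_add, show -a + -(b - a) = -b by ring] at h
  linarith

theorem integral_exp_neg_mul {s : ℝ} (hs : s ≠ 0) (T : ℝ) :
    ∫ x in 0..T, exp (-(s * x)) = (1 - exp (-(s * T))) / s := by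
  have := integral_comp_mul_left (fun x => exp x) (a := 0) (b := T) (neg_ne_zero.2 hs)
  simp only [neg_mul, mul_zero, integral_exp, exp_zero, smul_eq_mul] at this
  rw [this]
  field_simp
  ring

theorem Real.pow_mul_exp_neg_le_factorial {x : ℝ} (hx : 0 ≤ x) (n : ℕ) :
    x ^ n * exp (-x) ≤ n ! := by
  have := pow_div_factorial_le_exp x hx n
  rw [div_le_iff₀ (by positivity)] at this
  rw [exp_neg, ← div_eq_mul_inv, div_le_iff₀ (exp_pos x)]
  linarith

theorem exp_neg_mul_sin_le {s x : ℝ} (hs : 0 ≤ s) (hx₀ : 0 ≤ x) (hx : x ≤ π / 2) :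
    exp (-s * sin x) ≤ exp (-(s * x)) + s / 6 * (x ^ 3 * exp (-(2 * s / π * x))) := by
  have hjordan : 2 * s / π * x ≤ s * sin x := by
    rw [show 2 * s / π * x = s * (2 / π * x) by ring]
    exact mul_le_mul_of_nonneg_left (mul_le_sin hx₀ hx) hs
  have hcube : s * x - s * sin x ≤ s * (x ^ 3 / 6) := by
    rw [← mul_sub]; exact mul_le_mul_of_nonneg_left (by linarith [sin_ge_sub_cube hx₀]) hs
  have hgap : 0 ≤ s * x - s * sin x := by
    rw [← mul_sub]; exact mul_nonneg hs (by linarith [sin_le hx₀])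
  calc exp (-s * sin x)
      ≤ exp (-(s * x)) + exp (-(s * sin x)) * (s * x - s * sin x) := by
        rw [neg_mul]; linarith [exp_neg_sub_exp_neg_le (s * sin x) (s * x)]
    _ ≤ exp (-(s * x)) + exp (-(2 * s / π * x)) * (s * (x ^ 3 / 6)) := by
        gcongr
    _ = exp (-(s * x)) + s / 6 * (x ^ 3 * exp (-(2 * s / π * x))) := by ring

theorem integral_pi_div_two_exp_neg_mul_sin_le {s : ℝ} (hs : 0 < s) :
    ∫ x in 0..π / 2, exp (-s * sin x) ≤ 1 / s + π ^ 4 / (16 * s ^ 3) := by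
  have hc : 0 < 2 * s / π := by positivity
  calc ∫ x in 0..π / 2, exp (-s * sin x)
      ≤ ∫ x in 0..π / 2, (exp (-(s * x)) + s / 6 * (x ^ 3 * exp (-(2 * s / π * x)))) :=
        integral_mono_on (by positivity) (Continuous.intervalIntegrable (by fun_prop) _ _)
          (Continuous.intervalIntegrable (by fun_prop) _ _)
          fun x hx => exp_neg_mul_sin_le hs.le hx.1 hx.2
    _ = (∫ x in 0..π / 2, exp (-(s * x))) +
          s / 6 * ∫ x in 0..π / 2, x ^ 3 * exp (-(2 * s / π * x)) := by
        rw [integral_add (Continuous.intervalIntegrable (by fun_prop) _ _)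
          (Continuous.intervalIntegrable (by fun_prop) _ _), integral_const_mul]
    _ ≤ 1 / s + s / 6 * (3 ! / (2 * s / π) ^ (3 + 1)) := by
        gcongr
        · simpa using intervalIntegral_pow_mul_exp_neg_le (k := 0) (M := π / 2) (by positivity) hs
        · exact intervalIntegral_pow_mul_exp_neg_le (by positivity) hc
    _ = 1 / s + π ^ 4 / (16 * s ^ 3) := by
        norm_num [Nat.factorial]; field_simp; ring

theorem le_integral_pi_div_two_exp_neg_mul_sin {s : ℝ} (hs : 0 < s) :
    (1 - exp (-(s * (π / 2)))) / s ≤ ∫ x in 0..π / 2, exp (-s * sin x) := by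
  rw [← integral_exp_neg_mul hs.ne']
  refine integral_mono_on (by positivity) (Continuous.intervalIntegrable (by fun_prop) _ _)
    (Continuous.intervalIntegrable (by fun_prop) _ _) fun x hx => ?_
  rw [exp_le_exp, neg_mul, neg_le_neg_iff]
  exact mul_le_mul_of_nonneg_left (sin_le hx.1) hs.le

theorem abs_integral_exp_neg_mul_sin_sub_le {s : ℝ} (hs : 0 < s) :
    |(∫ x in 0..π, exp (-s * sin x)) - 2 / s| ≤ 16 / s ^ 3 := by
  have hhalf : ∫ x in 0..π, exp (-s * sin x) = 2 * ∫ x in 0..π / 2, exp (-s * sin x) := by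
    have := integral_zero_two_mul_eq_two_smul_of_symm (f := fun x => exp (-s * sin x))
      (a := π / 2) (by positivity) (Continuous.intervalIntegrable (by fun_prop) _ _)
      fun x => by rw [mul_div_cancel₀ _ two_ne_zero, sin_pi_sub]
    rwa [mul_div_cancel₀ _ two_ne_zero] at this
  have htail : 2 * exp (-(s * (π / 2))) / s ≤ 16 / s ^ 3 := by
    have h := pow_mul_exp_neg_le_factorial (x := s * (π / 2)) (by positivity) 2
    have hpi : 1 ≤ π ^ 2 / 4 := by nlinarith [pi_gt_three]
    rw [div_le_div_iff₀ hs (by positivity)]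
    simp only [Nat.factorial] at h
    nlinarith [exp_pos (-(s * (π / 2))), pow_pos hs 2]
  have hmain : 2 * (π ^ 4 / (16 * s ^ 3)) ≤ 16 / s ^ 3 := by
    have hpi2 : π ^ 2 ≤ 10 := by nlinarith [pi_lt_d2, pi_pos]
    have hpi : π ^ 4 ≤ 128 := by nlinarith
    rw [show 2 * (π ^ 4 / (16 * s ^ 3)) = π ^ 4 / 8 / s ^ 3 by ring]
    gcongr
    linarith
  have hlow := le_integral_pi_div_two_exp_neg_mul_sin hs
  have hupp := integral_pi_div_two_exp_neg_mul_sin_le hs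
  rw [hhalf, abs_le]
  constructor
  · have : 2 * ((1 - exp (-(s * (π / 2)))) / s) = 2 / s - 2 * exp (-(s * (π / 2))) / s := by ring
    linarith
  · have : 2 * (1 / s) = 2 / s := by ring
    linarith

theorem struve_asymptotic :
    (∀ s : ℝ, 0 < s →
      |(∫ x in (0:ℝ)..Real.pi, Real.exp (-s * Real.sin x)) - 2 / s| ≤ 16 / s ^ 3) ∧
    ∃ s₀ : ℝ, 0 < s₀ ∧ ∀ s : ℝ, s₀ ≤ s →
      (∫ x in (0:ℝ)..Real.pi, Real.exp (-s * Real.sin x)) ≤ 3 / s := by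
  refine ⟨fun s hs => abs_integral_exp_neg_mul_sin_sub_le hs, 4, by norm_num, fun s hs => ?_⟩
  have hs₀ : 0 < s := by linarith
  have hsmall : 16 / s ^ 3 ≤ 1 / s := by
    rw [div_le_div_iff₀ (by positivity) hs₀]
    have hfactor : 0 ≤ s * (s - 4) * (s + 4) := by
      have : 0 ≤ s - 4 := by linarith
      positivity
    nlinarith
  have hsum : 2 / s + 1 / s = 3 / s := by ring
  linarith [(abs_le.1 (abs_integral_exp_neg_mul_sin_sub_le hs₀)).2]
end
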